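/- arXiv:1212.0174 — 6 statements merged into one kernel-verified Lean document; each statement's English description precedes it below -/
import Mathlib

section
/- Let B be a complex p×p matrix with det(B) = 0 such that 0 is a simple eigenvalue of B. Let l be a row vector and r a column vector with lB = 0, Br = 0, and l·r = 1, and let β be the product of the p−1 nonzero eigenvalues of B (counted with multiplicity). Then the Fréchet derivative of the determinant at B, applied to an arbitrary matrix X, equals β·(l X r). -/
/-! Jacobi's formula gives the derivative `trace (adjugate B * X)`. As `0` is a simple eigenvalue,
both null spaces of `B` are lines, and `B * adjugate B = adjugate B * B = det B • 1 = 0` puts every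
column of `adjugate B` on `r` and every row on `l`; with `l ⬝ᵥ r = 1` this gives
`adjugate B = trace (adjugate B) • vecMulVec r l`. Finally `trace (adjugate B)` is the derivative of
`det (B + t • 1) = ∏ᵢ (λᵢ + t) = t * ∏_{λᵢ ≠ 0} (λᵢ + t)` at `t = 0`, which is `β`. -/

open Matrix Polynomial Module

theorem Multiset.eq_cons_filter_ne_of_count_eq_one {α : Type*} [DecidableEq α] {s : Multiset α}
    {a : α} (h : s.count a = 1) : s = a ::ₘ s.filter (· ≠ a) := by
  calc s = s.filter (· = a) + s.filter (· ≠ a) := (Multiset.filter_add_not _ s).symm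
    _ = a ::ₘ s.filter (· ≠ a) := by
      rw [Multiset.filter_eq', h, Multiset.replicate_one, Multiset.singleton_add]

namespace Matrix

variable {n : Type*} [Fintype n] [DecidableEq n]

theorem det_updateRow_eq_mul_adjugate_apply {R : Type*} [CommRing R] (A X : Matrix n n R) (i : n) :
    (A.updateRow i (X i)).det = (X * adjugate A) i i := by
  rw [← cramer_transpose_apply, cramer_eq_adjugate_mulVec, ← adjugate_transpose]
  simp only [mulVec, dotProduct, transpose_apply, mul_apply, mul_comm]

theorem hasDerivAt_det_add_smul {𝕜 : Type*} [NontriviallyNormedField 𝕜] (A X : Matrix n n 𝕜) :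
    HasDerivAt (fun ε : 𝕜 => (A + ε • X).det) (trace (adjugate A * X)) 0 := by
  let detRows : ContinuousMultilinearMap 𝕜 (fun _ : n => n → 𝕜) 𝕜 :=
    { toMultilinearMap := (detRowAlternating : (n → 𝕜) [⋀^n]→ₗ[𝕜] 𝕜).toMultilinearMap
      cont := continuous_id.matrix_det }
  have hrow (i : n) : HasDerivAt (fun ε : 𝕜 => A i + ε • X i) (X i) 0 := by
    simpa using ((hasDerivAt_id (0 : 𝕜)).smul_const (X i)).const_add (A i)
  have h := (HasFDerivAt.multilinear_comp detRows fun i => (hrow i).hasFDerivAt).hasDerivAt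
  simp only [_root_.sum_apply, ContinuousLinearMap.comp_apply,
    ContinuousLinearMap.toSpanSingleton_apply, one_smul, zero_smul, add_zero] at h
  rw [trace_mul_comm]
  simp only [trace, diag, ← det_updateRow_eq_mul_adjugate_apply]
  exact h

theorem adjugate_eq_trace_smul_vecMulVec {R : Type*} [CommRing R] {B : Matrix n n R}
    (hB : B.det = 0) {l r : n → R} (hr : ∀ v, B *ᵥ v = 0 → ∃ c : R, c • r = v)
    (hl : ∀ w, w ᵥ* B = 0 → ∃ c : R, c • l = w) (hlr : l ⬝ᵥ r = 1) :
    adjugate B = trace (adjugate B) • vecMulVec r l := by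
  have hcols : vecMulVec r l * adjugate B = adjugate B := by
    refine ext_of_mulVec_single fun j => ?_
    obtain ⟨c, hc⟩ := hr (adjugate B *ᵥ Pi.single j 1) <| by
      rw [mulVec_mulVec, mul_adjugate, hB, zero_smul, zero_mulVec]
    rw [← mulVec_mulVec, ← hc, vecMulVec_mulVec, dotProduct_smul, hlr]
    simp
  obtain ⟨γ, hγ⟩ := hl (l ᵥ* adjugate B) <| by
    rw [vecMul_vecMul, adjugate_mul, hB, zero_smul, vecMul_zero]
  have hadj : adjugate B = γ • vecMulVec r l := by
    rw [← hcols, vecMulVec_mul, ← hγ, vecMulVec_smul]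
  rw [hadj, trace_smul, trace_vecMulVec, dotProduct_comm, hlr, smul_eq_mul, mul_one]

section Field

variable {K : Type*} [Field K]

theorem finrank_ker_toLin'_le_rootMultiplicity_zero (B : Matrix n n K) :
    finrank K (LinearMap.ker (toLin' B)) ≤ rootMultiplicity 0 B.charpoly := by
  have hker : LinearMap.ker (toLin' B) ≤ Module.End.maxGenEigenspace (toLin' B) 0 := fun x hx =>
    (Module.End.mem_maxGenEigenspace _ _ _).2 ⟨1, by simpa using hx⟩
  calc finrank K (LinearMap.ker (toLin' B))
      ≤ finrank K (Module.End.maxGenEigenspace (toLin' B) 0) := Submodule.finrank_mono hker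
    _ = rootMultiplicity 0 B.charpoly := by
      rw [LinearMap.finrank_maxGenEigenspace_zero_eq, charpoly_toLin',
        rootMultiplicity_eq_natTrailingDegree']

theorem exists_smul_eq_of_mulVec_eq_zero {B : Matrix n n K}
    (hB : rootMultiplicity 0 B.charpoly ≤ 1) {r : n → K} (hr : B *ᵥ r = 0) (hr0 : r ≠ 0)
    {v : n → K} (hv : B *ᵥ v = 0) : ∃ c : K, c • r = v := by
  have hspan : K ∙ r = LinearMap.ker (toLin' B) := by
    refine Submodule.eq_of_le_of_finrank_le ?_ ?_
    · simpa [Submodule.span_singleton_le_iff_mem] using hr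
    · rw [finrank_span_singleton hr0]
      exact (finrank_ker_toLin'_le_rootMultiplicity_zero B).trans hB
  rw [← Submodule.mem_span_singleton, hspan]
  simpa using hv

theorem det_add_smul_one_eq_prod_roots {B : Matrix n n K} (hB : B.charpoly.Splits) (t : K) :
    (B + t • 1).det = (B.charpoly.roots.map (· + t)).prod := by
  have hcard : Multiset.card B.charpoly.roots = Fintype.card n := by
    rw [splits_iff_card_roots.1 hB, charpoly_natDegree_eq_dim]
  have hdet : B.charpoly.eval (-t) = (-1) ^ Fintype.card n * (B + t • 1).det := by
    rw [eval_charpoly, ← det_neg]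
    congr 1
    ext i j
    by_cases hij : i = j <;> simp [hij, add_comm, sub_eq_add_neg]
  have hprod :
      B.charpoly.eval (-t) = (-1) ^ Fintype.card n * (B.charpoly.roots.map (· + t)).prod := by
    conv_lhs => rw [hB.eq_prod_roots_of_monic B.charpoly_monic]
    rw [eval_multiset_prod, Multiset.map_map, ← hcard, ← Multiset.card_map (· + t),
      ← Multiset.prod_map_neg, Multiset.map_map]
    congr 1
    refine Multiset.map_congr rfl fun x _ => ?_
    simp only [Function.comp_apply, eval_sub, eval_X, eval_C]
    ring
  exact mul_left_cancel₀ (pow_ne_zero _ (neg_ne_zero.2 one_ne_zero)) (hdet.symm.trans hprod)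

end Field

theorem hasDerivAt_det_add_smul_one {𝕜 : Type*} [NontriviallyNormedField 𝕜] [DecidableEq 𝕜]
    {B : Matrix n n 𝕜} (hB : B.charpoly.Splits) (h0 : rootMultiplicity 0 B.charpoly = 1) :
    HasDerivAt (fun t : 𝕜 => (B + t • 1).det) (B.charpoly.roots.filter (· ≠ 0)).prod 0 := by
  set S := B.charpoly.roots.filter (· ≠ 0)
  have hroots : B.charpoly.roots = 0 ::ₘ S :=
    Multiset.eq_cons_filter_ne_of_count_eq_one (by rw [count_roots, h0])
  let q : 𝕜[X] := (S.map fun s => X + C s).prod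
  have hq (t : 𝕜) : (S.map (· + t)).prod = q.eval t := by
    simp only [q, eval_multiset_prod, Multiset.map_map, Function.comp_def, eval_add, eval_X,
      eval_C, add_comm]
  have hdet : (fun t : 𝕜 => (B + t • 1).det) = fun t => (X * q).eval t := by
    funext t
    rw [det_add_smul_one_eq_prod_roots hB, hroots, Multiset.map_cons, Multiset.prod_cons, zero_add,
      hq, eval_mul, eval_X]
  rw [hdet]
  convert (X * q).hasDerivAt 0
  simp [derivative_mul, ← hq]

theorem trace_adjugate_eq_prod_roots_ne_zero {𝕜 : Type*} [NontriviallyNormedField 𝕜]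
    [DecidableEq 𝕜] {B : Matrix n n 𝕜} (hB : B.charpoly.Splits)
    (h0 : rootMultiplicity 0 B.charpoly = 1) :
    trace (adjugate B) = (B.charpoly.roots.filter (· ≠ 0)).prod := by
  simpa using (hasDerivAt_det_add_smul B 1).unique (hasDerivAt_det_add_smul_one hB h0)

end Matrix

/-- If `B` is a singular complex matrix with `0` a simple eigenvalue,
`l`, `r` are left/right null vectors with `l ⬝ᵥ r = 1`, and `β` is the product of
the nonzero eigenvalues of `B` (with multiplicity), then the Fréchet derivative
of `det` at `B` applied to `X` equals `β * (l X r)`. -/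
theorem frechet_derivative_det_singular
    {p : ℕ} (B : Matrix (Fin p) (Fin p) ℂ)
    (hdet : B.det = 0)
    (hsimple : Polynomial.rootMultiplicity (0 : ℂ) B.charpoly = 1)
    (l r : Fin p → ℂ)
    (hl : Matrix.vecMul l B = 0) (hr : B.mulVec r = 0)
    (hlr : l ⬝ᵥ r = 1)
    (β : ℂ) (hβ : β = (B.charpoly.roots.filter (fun z => z ≠ 0)).prod)
    (X : Matrix (Fin p) (Fin p) ℂ) :
    HasDerivAt (fun ε : ℂ => (B + ε • X).det) (β * (l ⬝ᵥ X.mulVec r)) 0 := by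
  have hr0 : r ≠ 0 := by rintro rfl; simp at hlr
  have hl0 : l ≠ 0 := by rintro rfl; simp at hlr
  have hsimpleT : rootMultiplicity 0 Bᵀ.charpoly = 1 := by rwa [charpoly_transpose]
  have hadj : adjugate B = β • vecMulVec r l := by
    rw [hβ, ← trace_adjugate_eq_prod_roots_ne_zero (IsAlgClosed.splits _) hsimple]
    refine adjugate_eq_trace_smul_vecMulVec hdet
      (fun v hv => exists_smul_eq_of_mulVec_eq_zero hsimple.le hr hr0 hv)
      (fun w hw => exists_smul_eq_of_mulVec_eq_zero hsimpleT.le ?_ hl0 ?_) hlr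
    · rwa [mulVec_transpose]
    · rwa [mulVec_transpose]
  have hjacobi := hasDerivAt_det_add_smul B X
  rwa [hadj, smul_mul, trace_smul, vecMulVec_mul, trace_vecMulVec, dotProduct_comm,
    ← dotProduct_mulVec, smul_eq_mul] at hjacobi
end

section
/- Let A(x,y) = x·∑_{j=0}^{ρ} y^j A_{s_0+j} where the A_{s_0+j} are fixed 0-1 matrices, and H(x,y) = det(I − A(x,y)). If (x_0, y_0) ∈ ℂ² with y_0 ≠ 0 is a minimal solution of H(x,y) = 0 (meaning there is no solution (x,y) with |x| < |x_0| and |y| < |y_0|), then the maximal absolute value of the eigenvalues of A(x_0, y_0) equals 1. -/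
/-!
Suppose `‖μ‖ > 1` for an eigenvalue `μ` of `x₀ • G y₀`, where `G y = ∑ j, y ^ j • As j`.
For `t ∈ (0, 1)`, an eigenvalue `λ` of `(t x₀) • G (t y₀)` with `‖λ‖ > 1` would make
`(t x₀ / λ, t y₀)` a zero of `det (1 - x • G y)` below the minimal one, so all these eigenvalues
lie in the closed unit disc and `‖det (μ - (t x₀) • G (t y₀))‖ ≥ (‖μ‖ - 1) ^ p`.
This lower bound passes to the limit `t → 1`, where the determinant vanishes.
-/

open Matrix Polynomial Filter Topology Set

theorem Polynomial.pow_natDegree_le_norm_eval {f : ℂ[X]} (hf : f.Monic) {r : ℝ}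
    (hroots : ∀ a ∈ f.roots, ‖a‖ ≤ r) {z : ℂ} (hz : r ≤ ‖z‖) :
    (‖z‖ - r) ^ f.natDegree ≤ ‖f.eval z‖ := by
  have hnorm (s : Multiset ℂ) : ‖s.prod‖ = (s.map (‖·‖)).prod := map_multiset_prod normHom s
  rw [(IsAlgClosed.splits f).eval_eq_prod_roots_of_monic hf, ← IsAlgClosed.card_roots_eq_natDegree,
    hnorm, Multiset.map_map, ← Multiset.prod_replicate, ← Multiset.map_const']
  refine Multiset.prod_map_le_prod_map₀ _ _ (fun _ _ => sub_nonneg.2 hz) fun a ha => ?_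
  calc ‖z‖ - r ≤ ‖z‖ - ‖a‖ := by linarith [hroots a ha]
    _ ≤ ‖z - a‖ := norm_sub_norm_le z a

namespace Matrix

variable {n : Type*} [Fintype n] [DecidableEq n]

theorem pow_card_le_norm_det_scalar_sub {N : Matrix n n ℂ} {r : ℝ}
    (hN : ∀ a ∈ spectrum ℂ N, ‖a‖ ≤ r) {z : ℂ} (hz : r ≤ ‖z‖) :
    (‖z‖ - r) ^ Fintype.card n ≤ ‖(scalar n z - N).det‖ := by
  rw [← eval_charpoly, ← charpoly_natDegree_eq_dim N]
  exact pow_natDegree_le_norm_eval (charpoly_monic N)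
    (fun a ha => hN a (mem_spectrum_iff_isRoot_charpoly.2 (isRoot_of_mem_roots ha))) hz

theorem one_mem_spectrum_iff_det_one_sub_eq_zero (M : Matrix n n ℂ) :
    1 ∈ spectrum ℂ M ↔ (1 - M).det = 0 := by
  rw [mem_spectrum_iff_isRoot_charpoly, IsRoot, eval_charpoly, map_one]

theorem norm_le_of_mem_spectrum_of_tendsto {α : Type*} {l : Filter α} [l.NeBot]
    {N : α → Matrix n n ℂ} {N₀ : Matrix n n ℂ} (hN : Tendsto N l (𝓝 N₀)) {r : ℝ}
    (hr : ∀ᶠ t in l, ∀ a ∈ spectrum ℂ (N t), ‖a‖ ≤ r) {μ : ℂ} (hμ : μ ∈ spectrum ℂ N₀) :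
    ‖μ‖ ≤ r := by
  by_contra! hμr
  have hdet : Tendsto (fun t => ‖(scalar n μ - N t).det‖) l (𝓝 0) := by
    have h0 : (scalar n μ - N₀).det = 0 := by
      rwa [← eval_charpoly, ← IsRoot, ← mem_spectrum_iff_isRoot_charpoly]
    have hc : Continuous fun M : Matrix n n ℂ => ‖(scalar n μ - M).det‖ := by fun_prop
    have := (hc.tendsto N₀).comp hN
    rwa [h0, norm_zero] at this
  have hbound : (‖μ‖ - r) ^ Fintype.card n ≤ 0 :=
    ge_of_tendsto hdet (hr.mono fun t ht => pow_card_le_norm_det_scalar_sub ht hμr.le)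
  exact hbound.not_gt (pow_pos (sub_pos.2 hμr) _)

end Matrix

theorem norm_ofReal_mul_lt {t : ℝ} (ht : t ∈ Ioo 0 1) {z : ℂ} (hz : z ≠ 0) :
    ‖(t : ℂ) * z‖ < ‖z‖ := by
  rw [norm_mul, Complex.norm_of_nonneg ht.1.le]
  exact mul_lt_of_lt_one_left (norm_pos_iff.2 hz) ht.2

section MinimalZero

variable {n : Type*} [Fintype n] [DecidableEq n] {G : ℂ → Matrix n n ℂ} {x₀ y₀ : ℂ}

theorem norm_le_one_of_mem_spectrum_smul_of_minimal
    (hmin : ¬ ∃ x y : ℂ, (1 - x • G y).det = 0 ∧ ‖x‖ < ‖x₀‖ ∧ ‖y‖ < ‖y₀‖)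
    {x y : ℂ} (hx : ‖x‖ < ‖x₀‖) (hy : ‖y‖ < ‖y₀‖) {μ : ℂ}
    (hμ : μ ∈ spectrum ℂ (x • G y)) : ‖μ‖ ≤ 1 := by
  by_contra! hμ1
  have hμ0 : μ ≠ 0 := norm_pos_iff.1 (one_pos.trans hμ1)
  have h1 : 1 ∈ spectrum ℂ ((μ⁻¹ * x) • G y) := by
    rw [mul_smul, ← inv_mul_cancel₀ hμ0, ← smul_eq_mul]
    exact spectrum.smul_mem_smul_iff (r := Units.mk0 μ⁻¹ (inv_ne_zero hμ0)) |>.2 hμ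
  refine hmin ⟨μ⁻¹ * x, y, (one_mem_spectrum_iff_det_one_sub_eq_zero _).1 h1, ?_, hy⟩
  rw [norm_mul, norm_inv]
  calc ‖μ‖⁻¹ * ‖x‖ ≤ ‖x‖ := mul_le_of_le_one_left (norm_nonneg x) (inv_le_one_of_one_le₀ hμ1.le)
    _ < ‖x₀‖ := hx

theorem norm_le_one_of_mem_spectrum_of_minimal
    (hmin : ¬ ∃ x y : ℂ, (1 - x • G y).det = 0 ∧ ‖x‖ < ‖x₀‖ ∧ ‖y‖ < ‖y₀‖)
    (hG : Continuous G) (hx₀ : x₀ ≠ 0) (hy₀ : y₀ ≠ 0) {μ : ℂ}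
    (hμ : μ ∈ spectrum ℂ (x₀ • G y₀)) : ‖μ‖ ≤ 1 := by
  have hN : Tendsto (fun t : ℝ => ((t : ℂ) * x₀) • G (t * y₀)) (𝓝[<] 1) (𝓝 (x₀ • G y₀)) := by
    have hc : Continuous fun t : ℝ => ((t : ℂ) * x₀) • G (t * y₀) := by fun_prop
    simpa using (hc.tendsto 1).mono_left nhdsWithin_le_nhds
  refine norm_le_of_mem_spectrum_of_tendsto hN ?_ hμ
  filter_upwards [Ioo_mem_nhdsLT one_pos] with t ht
  exact fun _ => norm_le_one_of_mem_spectrum_smul_of_minimal hmin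
    (norm_ofReal_mul_lt ht hx₀) (norm_ofReal_mul_lt ht hy₀)

end MinimalZero

theorem minimal_solution_spectral_radius_one_general
    {p ρ : ℕ}
    (As : Fin (ρ + 1) → Matrix (Fin p) (Fin p) ℂ)
    (x₀ y₀ : ℂ) (hy₀ : y₀ ≠ 0)
    (hroot : Matrix.det (1 - x₀ • ∑ j : Fin (ρ + 1), y₀ ^ (j : ℕ) • As j) = 0)
    (hmin : ¬ ∃ x y : ℂ, Matrix.det (1 - x • ∑ j : Fin (ρ + 1), y ^ (j : ℕ) • As j) = 0 ∧
      ‖x‖ < ‖x₀‖ ∧ ‖y‖ < ‖y₀‖) :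
    (1 : ℂ) ∈ spectrum ℂ (x₀ • ∑ j : Fin (ρ + 1), y₀ ^ (j : ℕ) • As j) ∧
    ∀ μ ∈ spectrum ℂ (x₀ • ∑ j : Fin (ρ + 1), y₀ ^ (j : ℕ) • As j), ‖μ‖ ≤ 1 := by
  have hx₀ : x₀ ≠ 0 := by
    rintro rfl
    simp at hroot
  exact ⟨(one_mem_spectrum_iff_det_one_sub_eq_zero _).2 hroot,
    fun μ => norm_le_one_of_mem_spectrum_of_minimal hmin (by fun_prop) hx₀ hy₀⟩

/-- Let `A(x,y) = x • ∑ j, y^j • As j` with the `As j` being 0-1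
matrices whose (primitive) sum is the full transition matrix, and let
`H(x,y) = det (1 - A(x,y))`.  If `(x₀, y₀)`, `y₀ ≠ 0`, is a minimal solution of
`H = 0` (no solution `(x,y)` has `|x| < |x₀|` and `|y| < |y₀|`), then the
maximal absolute value of the eigenvalues of `A(x₀,y₀)` is `1`: `1` is an
eigenvalue, and every eigenvalue has absolute value at most `1`. -/
theorem minimal_solution_spectral_radius_one
    {p ρ : ℕ} (hp : 0 < p)
    (As : Fin (ρ + 1) → Matrix (Fin p) (Fin p) ℂ)
    (h01 : ∀ j i k, As j i k = 0 ∨ As j i k = 1)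
    (hprim : ∃ n : ℕ, ∀ i k, ((∑ j, As j) ^ n) i k ≠ 0)
    (x₀ y₀ : ℂ) (hy₀ : y₀ ≠ 0)
    (hroot : Matrix.det (1 - x₀ • ∑ j : Fin (ρ + 1), y₀ ^ (j : ℕ) • As j) = 0)
    (hmin : ¬ ∃ x y : ℂ, Matrix.det (1 - x • ∑ j : Fin (ρ + 1), y ^ (j : ℕ) • As j) = 0 ∧
      ‖x‖ < ‖x₀‖ ∧ ‖y‖ < ‖y₀‖) :
    (1 : ℂ) ∈ spectrum ℂ (x₀ • ∑ j : Fin (ρ + 1), y₀ ^ (j : ℕ) • As j) ∧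
    ∀ μ ∈ spectrum ℂ (x₀ • ∑ j : Fin (ρ + 1), y₀ ^ (j : ℕ) • As j), ‖μ‖ ≤ 1 :=
  minimal_solution_spectral_radius_one_general As x₀ y₀ hy₀ hroot hmin
end

section
/- For α ∈ (0, 1/2), the system H(x,y) = 0, α·x·∂_x H = y·∂_y H with H(x,y) = 1 − x − x²y − x³y has a solution with x = (α − √(5α² − 4α + 1))/(2α − 1) and y = (1 − x)/(x³ + x²), and this x is real and lies in (0,1). -/
/-!
The first equation only fixes `y = (1 - x)/(x²(1 + x))`. Substituting it into the second and
clearing the factor `x(1 + x)` leaves the quadratic `1 - x² = 2α(1 + x - x²)`, i.e.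
`(2α - 1)x² - 2αx - (2α - 1) = 0`, whose roots are `(α ± √(5α² - 4α + 1))/(2α - 1)`.
For `0 < α < 1/2` the discriminant lies strictly between `α²` and `(1 - α)²`, so the root with
the minus sign lies in `(0, 1)`.
-/

namespace ExampleSystem

def H (x y : ℝ) : ℝ := 1 - x - x^2*y - x^3*y

theorem hasDerivAt_H_fst (x y : ℝ) :
    HasDerivAt (fun t => H t y) (-1 - 2*x*y - 3*x^2*y) x := by
  have h := (((hasDerivAt_id x).const_sub 1).sub
    ((hasDerivAt_pow 2 x).mul_const y)).sub ((hasDerivAt_pow 3 x).mul_const y)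
  refine h.congr_deriv ?_
  push_cast
  ring

theorem hasDerivAt_H_snd (x y : ℝ) :
    HasDerivAt (fun t => H x t) (-x^2 - x^3) y := by
  have h := (((hasDerivAt_id y).const_mul (x^2)).const_sub (1 - x)).sub
    ((hasDerivAt_id y).const_mul (x^3))
  refine h.congr_deriv ?_
  ring

theorem H_eq_zero {x y : ℝ} (hy : y * (x^3 + x^2) = 1 - x) : H x y = 0 := by
  unfold H
  linear_combination -hy

theorem critical_eq_of_quadratic {α x y : ℝ} (hx : 1 + x ≠ 0)
    (hq : 1 - x^2 = 2*α*(1 + x - x^2)) (hy : y * (x^3 + x^2) = 1 - x) :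
    α * x * (-1 - 2*x*y - 3*x^2*y) = y * (-x^2 - x^3) := by
  apply mul_left_cancel₀ hx
  linear_combination hq + (1 + x - 2*α - 3*α*x) * hy

noncomputable def criticalX (α : ℝ) : ℝ := (α - √(5*α^2 - 4*α + 1)) / (2*α - 1)

theorem sq_sqrt_discr (α : ℝ) : √(5*α^2 - 4*α + 1) ^ 2 = α^2 + (2*α - 1)^2 := by
  rw [Real.sq_sqrt (by nlinarith [sq_nonneg (2*α - 1)])]
  ring

theorem criticalX_quadratic {α : ℝ} (hα : 2*α - 1 ≠ 0) :
    1 - criticalX α ^ 2 = 2*α*(1 + criticalX α - criticalX α ^ 2) := by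
  have hx : criticalX α * (2*α - 1) = α - √(5*α^2 - 4*α + 1) := div_mul_cancel₀ _ hα
  apply mul_left_cancel₀ hα
  linear_combination (criticalX α * (2*α - 1) + α - √(5*α^2 - 4*α + 1) - 2*α) * hx
    + sq_sqrt_discr α

theorem criticalX_mem_Ioo {α : ℝ} (h₀ : 0 < α) (h₁ : α < 1/2) : criticalX α ∈ Set.Ioo 0 1 := by
  set s := √(5*α^2 - 4*α + 1)
  have hs : s ^ 2 = α^2 + (2*α - 1)^2 := sq_sqrt_discr α
  have hs₀ : 0 ≤ s := Real.sqrt_nonneg _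
  have hα_lt_s : α < s := by nlinarith
  have hs_lt : s < 1 - α := by nlinarith
  have hneg : 2*α - 1 < 0 := by linarith
  constructor
  · exact div_pos_of_neg_of_neg (by linarith) hneg
  · rw [criticalX, div_lt_one_of_neg hneg]
    linarith

end ExampleSystem

open ExampleSystem in
/-- for `α ∈ (0, 1/2)`, with
`x = (α - √(5α² - 4α + 1))/(2α - 1)` and `y = (1 - x)/(x³ + x²)`, the pair
`(x, y)` solves the system `H = 0`, `α x ∂ₓH = y ∂_yH` for
`H(x,y) = 1 - x - x²y - x³y`, and `x` is real with `x ∈ (0,1)`. -/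
theorem example_system_solution (α : ℝ) (hα₀ : 0 < α) (hα₁ : α < 1/2) :
    let x : ℝ := (α - Real.sqrt (5*α^2 - 4*α + 1)) / (2*α - 1)
    let y : ℝ := (1 - x) / (x^3 + x^2)
    (0 < x ∧ x < 1) ∧
    (1 - x - x^2*y - x^3*y = 0) ∧
    ∃ Hx Hy : ℝ,
      HasDerivAt (fun t : ℝ => 1 - t - t^2*y - t^3*y) Hx x ∧
      HasDerivAt (fun t : ℝ => 1 - x - x^2*t - x^3*t) Hy y ∧
      α * x * Hx = y * Hy := by
  intro x y
  obtain ⟨hx₀, hx₁⟩ : x ∈ Set.Ioo 0 1 := criticalX_mem_Ioo hα₀ hα₁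
  have hy : y * (x^3 + x^2) = 1 - x := div_mul_cancel₀ _ (by positivity)
  have hq : 1 - x^2 = 2*α*(1 + x - x^2) := criticalX_quadratic (by linarith)
  exact ⟨⟨hx₀, hx₁⟩, H_eq_zero hy, _, _, hasDerivAt_H_fst x y, hasDerivAt_H_snd x y,
    critical_eq_of_quadratic (by positivity) hq hy⟩
end

section
/- Let M be a nonnegative p×p matrix with spectral radius 1, positive right 1-eigenvector r and positive left 1-eigenvector l normalized so lr = 1, and suppose M = x_0 ∑_j y_0^j A_{s_0+j} for positive reals x_0, y_0 and 0-1 matrices A_{s_0+j}. Define the stochastic matrix Π_{jk} = M_{jk} r_k / r_j and stationary vector q_j = l_j r_j. Then the entropy h(μ_Π) = −∑_{j,k} q_j Π_{jk} ln Π_{jk} satisfies h(μ_Π) = −ln(x_0) − (l·Ã·r)·ln(y_0), where Ã = ∑_j j x_0 y_0^j A_{s_0+j}. -/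
/-!
Conjugating `M` by `diag r` gives `Π`, so `ln Π_{jk} = ln M_{jk} + ln r_k - ln r_j` on the support,
and the coboundary part `ln r_k - ln r_j` integrates to zero against the stationary flow
`l_j M_{jk} r_k`, because `l` and `r` are left and right fixed vectors of `M`. Since the supports of
the `A_{s₀+j}` are disjoint, every nonzero entry of `M` is some `x₀ y₀^j`, whose logarithm is
`ln x₀ + j ln y₀`; summing against the flow gives `ln x₀ · (l M r) + ln y₀ · (l Ã r)`.
-/

open Matrix

section ZeroOneFamily

variable {ι m n : Type*} [Fintype ι] {A : ι → Matrix m n ℝ}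

theorem sum_smul_apply_eq_zero_or_eq_of_disjoint (h01 : ∀ j i k, A j i k = 0 ∨ A j i k = 1)
    (hdisj : ∀ j j' i k, A j i k = 1 → A j' i k = 1 → j = j') (i : m) (k : n) :
    (∀ c : ι → ℝ, (∑ j, c j • A j) i k = 0) ∨ ∃ j₀, ∀ c : ι → ℝ, (∑ j, c j • A j) i k = c j₀ := by
  simp only [Matrix.sum_apply, Matrix.smul_apply, smul_eq_mul]
  by_cases h : ∃ j₀, A j₀ i k = 1
  · obtain ⟨j₀, hj₀⟩ := h
    have hzero : ∀ j ≠ j₀, A j i k = 0 := fun j hj =>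
      (h01 j i k).resolve_right fun h1 => hj (hdisj j j₀ i k h1 hj₀)
    refine Or.inr ⟨j₀, fun c => ?_⟩
    rw [Finset.sum_eq_single j₀ (fun j _ hj => by rw [hzero j hj, mul_zero])
      (fun h => absurd (Finset.mem_univ j₀) h), hj₀, mul_one]
  · simp only [not_exists] at h
    exact Or.inl fun c => Finset.sum_eq_zero fun j _ => by
      rw [(h01 j i k).resolve_right (h j), mul_zero]

theorem mul_log_geometric_sum_apply {ρ : ℕ} {A : Fin (ρ + 1) → Matrix m n ℝ}
    (h01 : ∀ j i k, A j i k = 0 ∨ A j i k = 1)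
    (hdisj : ∀ j j' i k, A j i k = 1 → A j' i k = 1 → j = j') (x₀ y₀ : ℝ) (i : m) (k : n) :
    let M := x₀ • ∑ j : Fin (ρ + 1), y₀ ^ (j : ℕ) • A j
    M i k * Real.log (M i k) = M i k * Real.log x₀
      + (∑ j : Fin (ρ + 1), (((j : ℕ) : ℝ) * x₀ * y₀ ^ (j : ℕ)) • A j) i k * Real.log y₀ := by
  intro M
  have hM : M = ∑ j : Fin (ρ + 1), (x₀ * y₀ ^ (j : ℕ)) • A j := by
    simp only [M, Finset.smul_sum, smul_smul]
  rw [hM]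
  rcases sum_smul_apply_eq_zero_or_eq_of_disjoint h01 hdisj i k with hzero | ⟨j₀, hj₀⟩
  · simp [hzero]
  · simp only [hj₀]
    by_cases hc : x₀ * y₀ ^ (j₀ : ℕ) = 0
    · linear_combination
        (Real.log (x₀ * y₀ ^ (j₀ : ℕ)) - Real.log x₀ - (j₀ : ℕ) * Real.log y₀) * hc
    · have hx₀ : x₀ ≠ 0 := left_ne_zero_of_mul hc
      have hy₀ : y₀ ^ (j₀ : ℕ) ≠ 0 := right_ne_zero_of_mul hc
      rw [Real.log_mul hx₀ hy₀, Real.log_pow]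
      ring

end ZeroOneFamily

section FixedVectors

variable {m : Type*} [Fintype m] {M : Matrix m m ℝ} {r l : m → ℝ}

theorem sum_sum_mul_mul_eq_dotProduct_mulVec (M : Matrix m m ℝ) (l r : m → ℝ) :
    ∑ j, ∑ k, l j * M j k * r k = l ⬝ᵥ M *ᵥ r := by
  simp only [dotProduct, mulVec, Finset.mul_sum, mul_assoc]

theorem sum_sum_mul_sub_eq_zero (hMr : M *ᵥ r = r) (hlM : l ᵥ* M = l) (f : m → ℝ) :
    ∑ j, ∑ k, l j * M j k * r k * (f k - f j) = 0 := by
  have hforward : ∑ j, ∑ k, l j * M j k * r k * f k = ∑ k, l k * r k * f k := by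
    rw [Finset.sum_comm]
    refine Finset.sum_congr rfl fun k _ => ?_
    simp only [← congrFun hlM k, vecMul, dotProduct, Finset.sum_mul]
  have hbackward : ∑ j, ∑ k, l j * M j k * r k * f j = ∑ j, l j * r j * f j := by
    refine Finset.sum_congr rfl fun j _ => ?_
    simp only [← congrFun hMr j, mulVec, dotProduct, Finset.mul_sum, Finset.sum_mul]
    exact Finset.sum_congr rfl fun k _ => by ring
  simp only [mul_sub, Finset.sum_sub_distrib, hforward, hbackward, sub_self]

theorem sum_sum_mul_log_doob_transform (hr : ∀ j, r j ≠ 0) (hMr : M *ᵥ r = r) (hlM : l ᵥ* M = l) :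
    ∑ j, ∑ k, (l j * r j) * (M j k * r k / r j) * Real.log (M j k * r k / r j)
      = ∑ j, ∑ k, l j * M j k * r k * Real.log (M j k) := by
  have hpoint : ∀ j k, (l j * r j) * (M j k * r k / r j) * Real.log (M j k * r k / r j)
      = l j * M j k * r k * Real.log (M j k)
        + l j * M j k * r k * (Real.log (r k) - Real.log (r j)) := by
    intro j k
    by_cases hM : M j k = 0
    · simp [hM]
    · rw [Real.log_div (mul_ne_zero hM (hr k)) (hr j), Real.log_mul hM (hr k)]
      field_simp [hr j]
      ring
  simp only [hpoint, Finset.sum_add_distrib, sum_sum_mul_sub_eq_zero hMr hlM, add_zero]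

end FixedVectors

-- `Real.log 0 = 0` makes the terms with `Π_{jk} = 0` vanish, as the convention `0 ln 0 = 0` demands.
theorem entropy_of_markov_measure_general
    {p ρ : ℕ} (x₀ y₀ : ℝ)
    (As : Fin (ρ + 1) → Matrix (Fin p) (Fin p) ℝ)
    (h01 : ∀ j i k, As j i k = 0 ∨ As j i k = 1)
    (hdisj : ∀ j j' i k, As j i k = 1 → As j' i k = 1 → j = j')
    (M : Matrix (Fin p) (Fin p) ℝ)
    (hM : M = x₀ • ∑ j : Fin (ρ + 1), y₀ ^ (j : ℕ) • As j)
    (r l : Fin p → ℝ) (hr : ∀ j, 0 < r j)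
    (hMr : M.mulVec r = r) (hlM : Matrix.vecMul l M = l)
    (hlr : l ⬝ᵥ r = 1) :
    -(∑ j, ∑ k, (l j * r j) * (M j k * r k / r j) * Real.log (M j k * r k / r j))
      = - Real.log x₀
        - (l ⬝ᵥ (∑ j : Fin (ρ + 1), (((j : ℕ) : ℝ) * x₀ * y₀ ^ (j : ℕ)) • As j).mulVec r)
          * Real.log y₀ := by
  set Ã := ∑ j : Fin (ρ + 1), (((j : ℕ) : ℝ) * x₀ * y₀ ^ (j : ℕ)) • As j
  have hentry : ∀ j k, M j k * Real.log (M j k) = M j k * Real.log x₀ + Ã j k * Real.log y₀ := by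
    subst hM
    exact mul_log_geometric_sum_apply h01 hdisj x₀ y₀
  have hflow : ∀ j k, l j * M j k * r k * Real.log (M j k)
      = l j * M j k * r k * Real.log x₀ + l j * Ã j k * r k * Real.log y₀ := by
    intro j k
    linear_combination l j * r k * hentry j k
  rw [sum_sum_mul_log_doob_transform (fun j => (hr j).ne') hMr hlM]
  simp only [hflow, Finset.sum_add_distrib, ← Finset.sum_mul, sum_sum_mul_mul_eq_dotProduct_mulVec,
    hMr, hlr]
  ring

/-- let `M = x₀ • ∑ j, y₀^j • A_j` be a nonnegative matrix of
spectral radius `1` built from 0-1 matrices `A_j` with disjoint supports, with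
positive right/left `1`-eigenvectors `r`, `l` normalized by `l ⬝ᵥ r = 1`.  For
the stochastic matrix `Π_{jk} = M_{jk} r_k / r_j` and stationary vector
`q_j = l_j r_j`, the entropy `h(μ_Π) = -∑ q_j Π_{jk} ln Π_{jk}` equals
`-ln x₀ - (l Ã r) ln y₀`, where `Ã = ∑ j, (j x₀ y₀^j) • A_j`.
(In Lean, `Real.log 0 = 0`, so vanishing terms are handled automatically.) -/
theorem entropy_of_markov_measure
    {p ρ : ℕ} (x₀ y₀ : ℝ) (hx₀ : 0 < x₀) (hy₀ : 0 < y₀)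
    (As : Fin (ρ + 1) → Matrix (Fin p) (Fin p) ℝ)
    (h01 : ∀ j i k, As j i k = 0 ∨ As j i k = 1)
    (hdisj : ∀ j j' i k, As j i k = 1 → As j' i k = 1 → j = j')
    (M : Matrix (Fin p) (Fin p) ℝ)
    (hM : M = x₀ • ∑ j : Fin (ρ + 1), y₀ ^ (j : ℕ) • As j)
    (hspec : ∀ μ ∈ spectrum ℂ (M.map (algebraMap ℝ ℂ)), ‖μ‖ ≤ 1)
    (r l : Fin p → ℝ) (hr : ∀ j, 0 < r j) (hl : ∀ j, 0 < l j)
    (hMr : M.mulVec r = r) (hlM : Matrix.vecMul l M = l)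
    (hlr : l ⬝ᵥ r = 1) :
    -(∑ j, ∑ k, (l j * r j) * (M j k * r k / r j) * Real.log (M j k * r k / r j))
      = - Real.log x₀
        - (l ⬝ᵥ (∑ j : Fin (ρ + 1), (((j : ℕ) : ℝ) * x₀ * y₀ ^ (j : ℕ)) • As j).mulVec r)
          * Real.log y₀ :=
  entropy_of_markov_measure_general x₀ y₀ As h01 hdisj M hM r l hr hMr hlM hlr
end

section
/- In the setting of weighted paths: if w is an admissible word of length n with total weight m = v(w), and x is a point of the interval Δ_{w_0…w_{n−1}} coded by w for a piecewise affine Markov lift F, then m ≤ F^{n−1}(x) ≤ m + 1. Conversely, if x ∈ [0,1] satisfies m ≤ F^{n−1}(x) ≤ m+1, then the coding word w of x of length n has weight v(w) ∈ {m−1, m, m+1}. -/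
/-- for a lift `F` of a piecewise affine Markov circle map with
partition `ξ` of `[0,1)` and weights `k i j` (defined by `F(ξ_i) ⊇ ξ_j + k i j`,
so that if `x ∈ ξ_i` and `F x` lands in `ξ_j` mod `1` then
`F x - k i j ∈ ξ_j`): if the orbit of `x` is coded by the word `w` of length
`n + 1` (i.e. `fᵗ x ∈ ξ_{w_t}` for all `t ≤ n`), then with `m = v(w)` the total
weight, `m ≤ Fⁿ x ≤ m + 1`; conversely, if `m' ≤ Fⁿ x ≤ m' + 1` then
`v(w) ∈ {m' - 1, m', m' + 1}`. -/
theorem weight_vs_lift_iterate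
    {p : ℕ} (ξ : Fin p → Set ℝ) (hξ : ∀ i, ξ i ⊆ Set.Ico (0:ℝ) 1)
    (F : ℝ → ℝ) (hlift : ∀ (x : ℝ) (z : ℤ), F (x + z) = F x + z)
    (k : Fin p → Fin p → ℤ)
    (hk : ∀ i j, ∀ x ∈ ξ i, (∃ z : ℤ, F x - z ∈ ξ j) → F x - (k i j : ℝ) ∈ ξ j)
    (n : ℕ) (w : Fin (n + 1) → Fin p) (x : ℝ)
    (hx0 : x ∈ ξ (w 0))
    (hx : ∀ t : Fin (n + 1), ∃ z : ℤ, F^[(t : ℕ)] x - z ∈ ξ (w t)) :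
    ((∑ t : Fin n, k (w t.castSucc) (w t.succ) : ℤ) : ℝ) ≤ F^[n] x ∧
    F^[n] x ≤ ((∑ t : Fin n, k (w t.castSucc) (w t.succ) : ℤ) : ℝ) + 1 ∧
    (∀ m : ℤ, (m : ℝ) ≤ F^[n] x → F^[n] x ≤ (m : ℝ) + 1 →
      (∑ t : Fin n, k (w t.castSucc) (w t.succ)) ∈ ({m - 1, m, m + 1} : Set ℤ)) := by
  -- a total version of `w` on `ℕ`
  set w' : ℕ → Fin p := fun i => w ⟨min i n, Nat.lt_succ_of_le (Nat.min_le_right i n)⟩ with hw'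
  have hw'eq : ∀ i : ℕ, (hi : i ≤ n) → w' i = w ⟨i, by omega⟩ := by
    intro i hi
    simp only [hw']
    congr 1
    exact Fin.ext (by simp [Nat.min_eq_left hi])
  set K : ℕ → ℤ := fun i => k (w' i) (w' (i + 1)) with hK
  -- key induction
  have key : ∀ t : ℕ, t ≤ n →
      F^[t] x - ((∑ i ∈ Finset.range t, K i : ℤ) : ℝ) ∈ ξ (w' t) := by
    intro t
    induction t with
    | zero =>
      intro _
      simpa [hw'eq 0 (Nat.zero_le n)] using hx0
    | succ t ih =>
      intro ht
      have ht' : t ≤ n := by omega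
      have hy := ih ht'
      set S : ℤ := ∑ i ∈ Finset.range t, K i with hS
      have hF : F (F^[t] x - (S : ℝ)) = F^[t + 1] x - (S : ℝ) := by
        have := hlift (F^[t] x - (S : ℝ)) S
        have h2 : F^[t] x - (S : ℝ) + (S : ℝ) = F^[t] x := by ring
        rw [h2] at this
        rw [Function.iterate_succ_apply']
        linarith
      have hex : ∃ z : ℤ, F (F^[t] x - (S : ℝ)) - z ∈ ξ (w' (t + 1)) := by
        obtain ⟨z, hz⟩ := hx ⟨t + 1, by omega⟩
        refine ⟨z - S, ?_⟩
        rw [hF, hw'eq (t + 1) ht]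
        have : F^[t + 1] x - (S : ℝ) - ((z - S : ℤ) : ℝ) = F^[t + 1] x - (z : ℝ) := by
          push_cast; ring
        rw [this]
        simpa using hz
      have := hk (w' t) (w' (t + 1)) _ hy hex
      rw [hF] at this
      have hsum : ((∑ i ∈ Finset.range (t + 1), K i : ℤ) : ℝ) = (S : ℝ) + (K t : ℝ) := by
        rw [Finset.sum_range_succ, hS]; push_cast; ring
      have hgoal : F^[t + 1] x - ((∑ i ∈ Finset.range (t + 1), K i : ℤ) : ℝ)
          = F^[t + 1] x - (S : ℝ) - ((K t : ℤ) : ℝ) := by rw [hsum]; ring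
      rw [hgoal]
      exact this
  -- identify the two sums
  have hsum_eq : (∑ t : Fin n, k (w t.castSucc) (w t.succ)) = ∑ i ∈ Finset.range n, K i := by
    rw [Finset.sum_range fun i => K i]
    apply Finset.sum_congr rfl
    intro t _
    have h1 : w' (t : ℕ) = w t.castSucc := by
      rw [hw'eq t (by omega)]; exact congrArg w (Fin.ext rfl)
    have h2 : w' ((t : ℕ) + 1) = w t.succ := by
      rw [hw'eq ((t : ℕ) + 1) (by omega)]; exact congrArg w (Fin.ext rfl)
    simp [hK, h1, h2]
  have hmem := key n le_rfl
  have hIco := hξ _ hmem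
  obtain ⟨h0, h1⟩ := hIco
  set m : ℤ := ∑ i ∈ Finset.range n, K i with hm
  rw [hsum_eq]
  refine ⟨by linarith, by linarith, ?_⟩
  intro m' hm1 hm2
  have hlt : (m' : ℝ) < (m : ℝ) + 1 := by linarith
  have hle : (m : ℝ) ≤ (m' : ℝ) + 1 := by linarith
  have hlt' : m' < m + 1 := by exact_mod_cast (by push_cast; linarith : ((m' : ℝ)) < ((m + 1 : ℤ) : ℝ))
  have hle' : m ≤ m' + 1 := by exact_mod_cast (by push_cast; linarith : ((m : ℝ)) ≤ ((m' + 1 : ℤ) : ℝ))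
  simp only [Set.mem_insert_iff, Set.mem_singleton_iff]
  omega
end

section
/- Fix t ∈ ℕ, α ∈ ℝ, and set m_j = ⌊jtα⌋ − ⌊(j−1)tα⌋ for j ≥ 1. Then each m_j equals ⌊tα⌋ or ⌊tα⌋ + 1, and if r > (t−1)·max{|s − α| : s ∈ S} + 1, then any concatenation of c blocks, where the j-th block is an admissible t-word of weight m_j (with admissible transitions between blocks, weights of transitions counted appropriately), lies in B_{ct,α,r}. -/
/-- fix `t ≥ 1`, `α ∈ ℝ`, and set `m_j = ⌊jtα⌋ - ⌊(j-1)tα⌋`.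
Then each `m_j` equals `⌊tα⌋` or `⌊tα⌋ + 1`; and if all edge weights `s`
along a word `w` of `c` blocks of `t` edges satisfy `|s - α| ≤ K` and
`r > (t-1)·K + 1`, while the cumulative weight after each block equals
`⌊jtα⌋` (so the `j`-th block has weight `m_j`), then the partial weights stay
in the `r`-strip of slope `α`: `α j - r ≤ v(w[0..j]) ≤ α j + r` for all
`1 ≤ j ≤ ct - 1`, i.e. `w ∈ B_{ct,α,r}`. -/
theorem block_concatenation_in_strip
    {p : ℕ} (t c : ℕ) (ht : 1 ≤ t) (α : ℝ) (w : ℕ → Fin p)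
    (k : Fin p → Fin p → ℤ) (K : ℝ) (hK : 0 ≤ K)
    (hedge : ∀ i : ℕ, i < c * t → |((k (w i) (w (i + 1)) : ℤ) : ℝ) - α| ≤ K)
    (r : ℕ) (hr : ((t : ℝ) - 1) * K + 1 < r)
    (hblocks : ∀ j : ℕ, 1 ≤ j → j ≤ c →
      (∑ i ∈ Finset.range (j * t), k (w i) (w (i + 1)) : ℤ)
        = ⌊((j * t : ℕ) : ℝ) * α⌋) :
    (∀ j : ℕ, 1 ≤ j →
      ⌊((j * t : ℕ) : ℝ) * α⌋ - ⌊(((j - 1) * t : ℕ) : ℝ) * α⌋ = ⌊(t : ℝ) * α⌋ ∨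
      ⌊((j * t : ℕ) : ℝ) * α⌋ - ⌊(((j - 1) * t : ℕ) : ℝ) * α⌋ = ⌊(t : ℝ) * α⌋ + 1) ∧
    (∀ j : ℕ, 1 ≤ j → j ≤ c * t - 1 →
      α * j - r ≤ ((∑ i ∈ Finset.range j, k (w i) (w (i + 1)) : ℤ) : ℝ) ∧
      ((∑ i ∈ Finset.range j, k (w i) (w (i + 1)) : ℤ) : ℝ) ≤ α * j + r) := by
  constructor
  · intro j hj
    have hjt : j * t = (j - 1) * t + t := by
      cases j with
      | zero => omega
      | succ n => simp [Nat.succ_sub_one, Nat.succ_mul]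
    have hx : ((j * t : ℕ) : ℝ) * α = (((j - 1) * t : ℕ) : ℝ) * α + (t : ℝ) * α := by
      rw [hjt]; push_cast; ring
    rw [hx]
    have h1 : ⌊(((j - 1) * t : ℕ) : ℝ) * α⌋ + ⌊(t : ℝ) * α⌋
        ≤ ⌊(((j - 1) * t : ℕ) : ℝ) * α + (t : ℝ) * α⌋ := by
      apply Int.le_floor.mpr
      push_cast
      exact add_le_add (Int.floor_le _) (Int.floor_le _)
    have h2 : ⌊(((j - 1) * t : ℕ) : ℝ) * α + (t : ℝ) * α⌋
        < ⌊(((j - 1) * t : ℕ) : ℝ) * α⌋ + ⌊(t : ℝ) * α⌋ + 2 := by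
      apply Int.floor_lt.mpr
      have hx1 := Int.lt_floor_add_one ((((j - 1) * t : ℕ) : ℝ) * α)
      have hx2 := Int.lt_floor_add_one ((t : ℝ) * α)
      have hc : ((⌊(((j - 1) * t : ℕ) : ℝ) * α⌋ + ⌊(t : ℝ) * α⌋ + 2 : ℤ) : ℝ)
          = ((⌊(((j - 1) * t : ℕ) : ℝ) * α⌋ : ℤ) : ℝ) + ((⌊(t : ℝ) * α⌋ : ℤ) : ℝ) + 2 := by
        push_cast; ring
      rw [hc]
      linarith
    omega
  · intro j hj1 hj2
    set e : ℕ → ℤ := fun i => k (w i) (w (i + 1)) with he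
    have htpos : 0 < t := ht
    have hpos : 0 < c * t := by
      rcases Nat.eq_zero_or_pos (c * t) with h | h
      · rw [h] at hj2; omega
      · exact h
    have hjct : j < c * t := Nat.lt_of_le_of_lt hj2 (Nat.sub_lt hpos one_pos)
    obtain ⟨q, b, hjqb, hblt, hqlt⟩ : ∃ q b, j = q * t + b ∧ b < t ∧ q < c :=
      ⟨j / t, j % t, (Nat.div_add_mod' j t).symm, Nat.mod_lt _ htpos,
        (Nat.div_lt_iff_lt_mul htpos).mpr hjct⟩
    have hqsum : (∑ i ∈ Finset.range (q * t), e i) = ⌊((q * t : ℕ) : ℝ) * α⌋ := by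
      rcases Nat.eq_zero_or_pos q with hq0 | hq1
      · subst hq0; simp
      · exact hblocks q hq1 (le_of_lt hqlt)
    have hsplit : (∑ i ∈ Finset.range j, e i)
        = (∑ i ∈ Finset.range (q * t), e i) + ∑ i ∈ Finset.range b, e (q * t + i) := by
      rw [hjqb, Finset.sum_range_add]
    have htail : |((∑ i ∈ Finset.range b, e (q * t + i) : ℤ) : ℝ) - b * α|
        ≤ ((t : ℝ) - 1) * K := by
      have h1 : ((∑ i ∈ Finset.range b, e (q * t + i) : ℤ) : ℝ) - b * α
          = ∑ i ∈ Finset.range b, (((e (q * t + i) : ℤ) : ℝ) - α) := by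
        rw [Finset.sum_sub_distrib]
        push_cast
        simp
      rw [h1]
      calc |∑ i ∈ Finset.range b, (((e (q * t + i) : ℤ) : ℝ) - α)|
          ≤ ∑ i ∈ Finset.range b, |((e (q * t + i) : ℤ) : ℝ) - α| :=
            Finset.abs_sum_le_sum_abs _ _
        _ ≤ ∑ _i ∈ Finset.range b, K := by
            apply Finset.sum_le_sum
            intro i hi
            apply hedge
            have : i < b := Finset.mem_range.mp hi
            omega
        _ = (b : ℝ) * K := by simp [mul_comm]
        _ ≤ ((t : ℝ) - 1) * K := by
            apply mul_le_mul_of_nonneg_right _ hK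
            have : (b : ℝ) + 1 ≤ (t : ℝ) := by exact_mod_cast hblt
            linarith
    have hfl1 : ((q * t : ℕ) : ℝ) * α - 1 < ((⌊((q * t : ℕ) : ℝ) * α⌋ : ℤ) : ℝ) :=
      Int.sub_one_lt_floor _
    have hfl2 : ((⌊((q * t : ℕ) : ℝ) * α⌋ : ℤ) : ℝ) ≤ ((q * t : ℕ) : ℝ) * α :=
      Int.floor_le _
    have hcast : (j : ℝ) = ((q * t : ℕ) : ℝ) + (b : ℝ) := by
      rw [hjqb]; push_cast; ring
    have habs := abs_le.mp htail
    rw [hsplit, hqsum, hcast]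
    push_cast at habs hfl1 hfl2 ⊢
    constructor <;> nlinarith [habs.1, habs.2, hfl1, hfl2, hr, hK]
end
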